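/- arXiv:1704.01801 — 2 statements merged into one kernel-verified Lean document; each statement's English description precedes it below -/
import Mathlib

section
/- Consider the sets S = {(x,u,z) ∈ ℝ × {0,1} × ℝ : either u = 0 and x = 0 and z ≥ 0, or u = 1 and a ≤ x ≤ b and z ≥ βx + γx²} with γ > 0 and 0 < a ≤ b. The closed convex hull of S is exactly {(x,u,z) : u ∈ [0,1], ua ≤ x ≤ ub, uz ≥ βxu + γx²} (interpreting the last constraint via the closed perspective of βx + γx²). -/
set_option maxHeartbeats 1000000 in
/-- Perspective reformulation (Frangioni–Gentile): the closed convex hull of the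
on/off epigraph of a convex quadratic cost over a semi-continuous variable is
described by the closed perspective of `βx + γx²`. Points are `(x, u, z)`. -/
theorem perspective_convex_hull (β γ a b : ℝ) (hγ : 0 < γ) (ha : 0 < a) (hab : a ≤ b) :
    closure (convexHull ℝ
      {p : ℝ × ℝ × ℝ |
        (p.2.1 = 0 ∧ p.1 = 0 ∧ 0 ≤ p.2.2) ∨
        (p.2.1 = 1 ∧ a ≤ p.1 ∧ p.1 ≤ b ∧ β * p.1 + γ * p.1 ^ 2 ≤ p.2.2)}) =
    {p : ℝ × ℝ × ℝ |
      0 ≤ p.2.1 ∧ p.2.1 ≤ 1 ∧ p.2.1 * a ≤ p.1 ∧ p.1 ≤ p.2.1 * b ∧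
      ((p.2.1 = 0 ∧ p.1 = 0 ∧ 0 ≤ p.2.2) ∨
        (0 < p.2.1 ∧ β * p.1 * p.2.1 + γ * p.1 ^ 2 ≤ p.2.1 * p.2.2))} := by
  set S : Set (ℝ × ℝ × ℝ) :=
    {p : ℝ × ℝ × ℝ |
      (p.2.1 = 0 ∧ p.1 = 0 ∧ 0 ≤ p.2.2) ∨
      (p.2.1 = 1 ∧ a ≤ p.1 ∧ p.1 ≤ b ∧ β * p.1 + γ * p.1 ^ 2 ≤ p.2.2)} with hS
  set T : Set (ℝ × ℝ × ℝ) :=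
    {p : ℝ × ℝ × ℝ |
      0 ≤ p.2.1 ∧ p.2.1 ≤ 1 ∧ p.2.1 * a ≤ p.1 ∧ p.1 ≤ p.2.1 * b ∧
      ((p.2.1 = 0 ∧ p.1 = 0 ∧ 0 ≤ p.2.2) ∨
        (0 < p.2.1 ∧ β * p.1 * p.2.1 + γ * p.1 ^ 2 ≤ p.2.1 * p.2.2))} with hT
  -- T is closed, via an intersection of closed sets
  have hTeq : T = ({p : ℝ × ℝ × ℝ | 0 ≤ p.2.1} ∩ {p | p.2.1 ≤ 1} ∩ {p | p.2.1 * a ≤ p.1}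
      ∩ {p | p.1 ≤ p.2.1 * b} ∩ {p | β * p.1 * p.2.1 + γ * p.1 ^ 2 ≤ p.2.1 * p.2.2}
      ∩ {p | (β + γ * a) * p.1 ≤ p.2.2}) := by
    ext ⟨x, u, z⟩
    simp only [hT, Set.mem_setOf_eq, Set.mem_inter_iff]
    constructor
    · rintro ⟨h0, h1, hxa, hxb, hbr⟩
      rcases hbr with ⟨hu, hx, hz⟩ | ⟨hu, hq⟩
      · subst hu; subst hx
        refine ⟨⟨⟨⟨⟨le_refl 0, by norm_num⟩, by simpa using hxa⟩, by simpa using hxb⟩,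
          by norm_num⟩, by simpa using hz⟩
      · have hx0 : 0 ≤ x := le_trans (mul_nonneg h0 ha.le) hxa
        have h2 : u * a * x ≤ x * x := mul_le_mul_of_nonneg_right hxa hx0
        have h3 : u * ((β + γ * a) * x) ≤ u * z := by nlinarith [hq, h2]
        exact ⟨⟨⟨⟨⟨h0, h1⟩, hxa⟩, hxb⟩, hq⟩, le_of_mul_le_mul_left h3 hu⟩
    · rintro ⟨⟨⟨⟨⟨h0, h1⟩, hxa⟩, hxb⟩, hq⟩, hlin⟩
      rcases h0.lt_or_eq with hu | hu
      · exact ⟨h0, h1, hxa, hxb, Or.inr ⟨hu, hq⟩⟩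
      · have hu' : u = 0 := hu.symm
        subst hu'
        have hx : x = 0 := le_antisymm (by simpa using hxb) (by simpa using hxa)
        subst hx
        exact ⟨le_refl 0, h1, hxa, hxb, Or.inl ⟨rfl, rfl, by simpa using hlin⟩⟩
  have hTclosed : IsClosed T := by
    rw [hTeq]
    refine (((((isClosed_le (by fun_prop) (by fun_prop)).inter
      (isClosed_le (by fun_prop) (by fun_prop))).inter
      (isClosed_le (by fun_prop) (by fun_prop))).inter
      (isClosed_le (by fun_prop) (by fun_prop))).inter
      (isClosed_le (by fun_prop) (by fun_prop))).inter
      (isClosed_le (by fun_prop) (by fun_prop))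
  have hU : ∀ t s u1 u2 : ℝ, 0 ≤ t → 0 ≤ s → t + s = 1 → 0 < u1 → 0 < u2 →
      0 < t * u1 + s * u2 := by
    intro t s u1 u2 ht hs hts h1 h2
    rcases ht.lt_or_eq with h | h
    · nlinarith [mul_pos h h1, mul_nonneg hs h2.le]
    · have hs' : 0 < s := by linarith
      rw [← h]
      simpa using mul_pos hs' h2
  -- T is convex
  have hTconv : Convex ℝ T := by
    rintro ⟨x1, u1, z1⟩ ⟨h01, h11, hxa1, hxb1, hbr1⟩ ⟨x2, u2, z2⟩
      ⟨h02, h12, hxa2, hxb2, hbr2⟩ t s ht hs hts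
    dsimp only at h01 h11 hxa1 hxb1 hbr1 h02 h12 hxa2 hxb2 hbr2
    simp only [hT, Set.mem_setOf_eq, Prod.smul_mk, Prod.mk_add_mk, smul_eq_mul]
    refine ⟨by nlinarith [mul_nonneg ht h01, mul_nonneg hs h02],
      by nlinarith [mul_le_mul_of_nonneg_left h11 ht, mul_le_mul_of_nonneg_left h12 hs],
      by nlinarith [mul_le_mul_of_nonneg_left hxa1 ht, mul_le_mul_of_nonneg_left hxa2 hs],
      by nlinarith [mul_le_mul_of_nonneg_left hxb1 ht, mul_le_mul_of_nonneg_left hxb2 hs], ?_⟩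
    rcases hbr1 with ⟨hu1, hx1, hz1⟩ | ⟨hu1, hq1⟩ <;>
      rcases hbr2 with ⟨hu2, hx2, hz2⟩ | ⟨hu2, hq2⟩
    · subst hu1; subst hx1; subst hu2; subst hx2
      exact Or.inl ⟨by ring, by ring, by nlinarith [mul_nonneg ht hz1, mul_nonneg hs hz2]⟩
    · subst hu1; subst hx1
      rcases hs.lt_or_eq with hs0 | hs0
      · refine Or.inr ⟨by nlinarith [mul_pos hs0 hu2], ?_⟩
        nlinarith [mul_nonneg (mul_nonneg (mul_nonneg ht hs) hu2.le) hz1,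
          mul_nonneg (mul_nonneg hs hs) (sub_nonneg.mpr hq2)]
      · have ht1 : t = 1 := by linarith
        exact Or.inl ⟨by rw [← hs0]; ring, by rw [← hs0]; ring,
          by rw [← hs0, ht1]; linarith⟩
    · subst hu2; subst hx2
      rcases ht.lt_or_eq with ht0 | ht0
      · refine Or.inr ⟨by nlinarith [mul_pos ht0 hu1], ?_⟩
        nlinarith [mul_nonneg (mul_nonneg (mul_nonneg hs ht) hu1.le) hz2,
          mul_nonneg (mul_nonneg ht ht) (sub_nonneg.mpr hq1)]
      · have hs1 : s = 1 := by linarith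
        exact Or.inl ⟨by rw [← ht0]; ring, by rw [← ht0]; ring,
          by rw [← ht0, hs1]; linarith⟩
    · have hseq : s = 1 - t := by linarith
      subst hseq
      refine Or.inr ⟨hU t (1 - t) u1 u2 ht hs hts hu1 hu2, ?_⟩
      have k1 : 0 ≤ t * u2 * (t * u1 + (1 - t) * u2)
          * (u1 * z1 - (β * x1 * u1 + γ * x1 ^ 2)) :=
        mul_nonneg (mul_nonneg (mul_nonneg ht hu2.le)
          (hU t (1 - t) u1 u2 ht hs hts hu1 hu2).le) (by linarith)
      have k2 : 0 ≤ (1 - t) * u1 * (t * u1 + (1 - t) * u2)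
          * (u2 * z2 - (β * x2 * u2 + γ * x2 ^ 2)) :=
        mul_nonneg (mul_nonneg (mul_nonneg hs hu1.le)
          (hU t (1 - t) u1 u2 ht hs hts hu1 hu2).le) (by linarith)
      have k3 : 0 ≤ γ * t * (1 - t) * (u1 * x2 - u2 * x1) ^ 2 :=
        mul_nonneg (mul_nonneg (mul_nonneg hγ.le ht) hs) (sq_nonneg _)
      have hid : ((t * u1 + (1 - t) * u2) * (t * z1 + (1 - t) * z2)
          - β * (t * x1 + (1 - t) * x2) * (t * u1 + (1 - t) * u2)
          - γ * (t * x1 + (1 - t) * x2) ^ 2) * (u1 * u2)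
          = t * u2 * (t * u1 + (1 - t) * u2) * (u1 * z1 - (β * x1 * u1 + γ * x1 ^ 2))
          + (1 - t) * u1 * (t * u1 + (1 - t) * u2)
            * (u2 * z2 - (β * x2 * u2 + γ * x2 ^ 2))
          + γ * t * (1 - t) * (u1 * x2 - u2 * x1) ^ 2 := by ring
      have key : 0 ≤ ((t * u1 + (1 - t) * u2) * (t * z1 + (1 - t) * z2)
          - β * (t * x1 + (1 - t) * x2) * (t * u1 + (1 - t) * u2)
          - γ * (t * x1 + (1 - t) * x2) ^ 2) * (u1 * u2) := by
        rw [hid]; exact add_nonneg (add_nonneg k1 k2) k3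
      have key2 := (mul_nonneg_iff_of_pos_right (mul_pos hu1 hu2)).mp key
      linarith [key2]
  -- S ⊆ T
  have hST : S ⊆ T := by
    rintro ⟨x, u, z⟩ hp
    rcases hp with ⟨hu, hx, hz⟩ | ⟨hu, hxa, hxb, hq⟩
    · dsimp only at hu hx hz
      subst hu; subst hx
      exact ⟨le_refl 0, by norm_num, by norm_num, by norm_num, Or.inl ⟨rfl, rfl, hz⟩⟩
    · dsimp only at hu hxa hxb hq
      subst hu
      exact ⟨by norm_num, le_refl 1, by simpa using hxa, by simpa using hxb,
        Or.inr ⟨one_pos, show β * x * 1 + γ * x ^ 2 ≤ 1 * z by nlinarith [hq]⟩⟩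
  apply Set.Subset.antisymm
  · exact closure_minimal (convexHull_min hST hTconv) hTclosed
  · rintro ⟨x, u, z⟩ ⟨h0, h1, hxa, hxb, hbr⟩
    dsimp only at h0 h1 hxa hxb hbr
    apply subset_closure
    rcases hbr with ⟨hu, hx, hz⟩ | ⟨hu, hq⟩
    · exact subset_convexHull ℝ S (Or.inl ⟨hu, hx, hz⟩)
    · have hu' : u ≠ 0 := hu.ne'
      have hqS : ((x / u, 1, z / u) : ℝ × ℝ × ℝ) ∈ S := by
        refine Or.inr ⟨rfl, (le_div_iff₀ hu).mpr (by linarith),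
          (div_le_iff₀ hu).mpr (by linarith), ?_⟩
        show β * (x / u) + γ * (x / u) ^ 2 ≤ z / u
        have h2 : (0:ℝ) < u ^ 2 := by positivity
        have heq : β * (x / u) + γ * (x / u) ^ 2 = (β * x * u + γ * x ^ 2) / u ^ 2 := by
          field_simp
        rw [heq, div_le_div_iff₀ h2 hu]
        nlinarith [mul_le_mul_of_nonneg_right hq hu.le]
      have hrS : ((0, 0, 0) : ℝ × ℝ × ℝ) ∈ S := Or.inl ⟨rfl, rfl, le_refl 0⟩
      have key : ((x, u, z) : ℝ × ℝ × ℝ)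
          = u • ((x / u, 1, z / u) : ℝ × ℝ × ℝ) + (1 - u) • ((0, 0, 0) : ℝ × ℝ × ℝ) := by
        simp only [Prod.smul_mk, Prod.mk_add_mk, smul_eq_mul, Prod.mk.injEq]
        refine ⟨by field_simp; ring, by ring, by field_simp; ring⟩
      rw [key]
      exact (convex_convexHull ℝ S) (subset_convexHull ℝ S hqS) (subset_convexHull ℝ S hrS)
        hu.le (by linarith) (by ring)
end

section
/- Suppose the feasible region of MILP-1 (constraints (2),(4),(5),(7)–(10),(14), with transmission losses set to zero in (2)) is nonempty, where the cuts (14) are generated at points P^{j(l)} = P_{ij}^{min} + l(P_{ij}^{max} − P_{ij}^{min})/L for l = 0,…,L. Then the optimal value of MILP-1 is a lower bound on the optimal value of the MIQP (11), and the gap is at most T · Σᵢ γᵢ · max_j (P_{ij}^{max} − P_{ij}^{min})² / (4L²). -/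
/-- Data of the dynamic economic dispatch problem with prohibited operating zones:
`N` units, `T` periods, unit `i` has `n i + 1` allowed operating intervals
`[Pmin i j, Pmax i j]`, quadratic cost coefficients `alpha, beta, gamma`,
demands `D`, ramp limits `RD, RU`, reserve requirements `R`. -/
structure DEDData where
  N : ℕ
  T : ℕ
  n : Fin N → ℕ
  Pmin : (i : Fin N) → Fin (n i + 1) → ℝ
  Pmax : (i : Fin N) → Fin (n i + 1) → ℝ
  alpha : Fin N → ℝ
  beta : Fin N → ℝ
  gamma : Fin N → ℝ
  D : Fin T → ℝ
  RD : Fin N → ℝ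
  RU : Fin N → ℝ
  R : Fin T → ℝ

/-- Common feasibility constraints (2) with zero losses, (4), (5), (7), (8)–(10). -/
def DEDData.Feasible (d : DEDData)
    (P : Fin d.T → Fin d.N → ℝ)
    (p : Fin d.T → (i : Fin d.N) → Fin (d.n i + 1) → ℝ)
    (u : Fin d.T → (i : Fin d.N) → Fin (d.n i + 1) → ℝ)
    (SR : Fin d.T → Fin d.N → ℝ) : Prop :=
  -- power balance (losses ignored)
  (∀ t, ∑ i, P t i = d.D t) ∧
  -- generation limits
  (∀ t i, d.Pmin i 0 ≤ P t i ∧ P t i ≤ d.Pmax i (Fin.last _)) ∧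
  -- ramp rate limits
  (∀ (t : ℕ) (ht : t + 1 < d.T) i,
      d.RD i ≤ P ⟨t + 1, ht⟩ i - P ⟨t, Nat.lt_of_succ_lt ht⟩ i ∧
      P ⟨t + 1, ht⟩ i - P ⟨t, Nat.lt_of_succ_lt ht⟩ i ≤ d.RU i) ∧
  -- spinning reserve constraints
  (∀ t i, SR t i ≤ d.Pmax i (Fin.last _) - P t i ∧ SR t i ≤ d.RU i) ∧
  (∀ t, d.R t ≤ ∑ i, SR t i) ∧
  -- POZ reformulation (8)–(10)
  (∀ t i j, u t i j = 0 ∨ u t i j = 1) ∧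
  (∀ t i j, u t i j * d.Pmin i j ≤ p t i j ∧ p t i j ≤ u t i j * d.Pmax i j) ∧
  (∀ t i, ∑ j, p t i j = P t i) ∧
  (∀ t i, ∑ j, u t i j = 1)

/-- Objective values attainable by the MIQP formulation (11). -/
def DEDData.miqpVals (d : DEDData) : Set ℝ :=
  {c | ∃ P p u SR, d.Feasible P p u SR ∧
    c = ∑ t, ∑ i, (d.alpha i + d.beta i * P t i + d.gamma i * (P t i) ^ 2)}

/-- Objective values attainable by the MILP-1 formulation (15), with perspective
cuts (14) generated at the `L+1` equally spaced points of each allowed interval. -/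
def DEDData.milpVals (d : DEDData) (L : ℕ) : Set ℝ :=
  {c | ∃ P p u SR, ∃ z : Fin d.T → (i : Fin d.N) → Fin (d.n i + 1) → ℝ,
    d.Feasible P p u SR ∧
    (∀ t i j, ∀ l ∈ Finset.range (L + 1),
      (2 * d.gamma i * (d.Pmin i j + (l : ℝ) * (d.Pmax i j - d.Pmin i j) / L) + d.beta i)
          * p t i j
        - d.gamma i * (d.Pmin i j + (l : ℝ) * (d.Pmax i j - d.Pmin i j) / L) ^ 2
          * u t i j
        ≤ z t i j) ∧
    c = ∑ t, ∑ i, (d.alpha i + ∑ j, z t i j)}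

lemma exists_one_aux {m : ℕ} (u : Fin (m + 1) → ℝ)
    (h01 : ∀ j, u j = 0 ∨ u j = 1) (hsum : ∑ j, u j = 1) :
    ∃ j0, u j0 = 1 ∧ ∀ j, j ≠ j0 → u j = 0 := by
  have hnn : ∀ j, 0 ≤ u j := fun j => by rcases h01 j with h | h <;> simp [h]
  have hex : ∃ j0, u j0 ≠ 0 := by
    by_contra h
    push_neg at h
    rw [Finset.sum_eq_zero (fun j _ => h j)] at hsum
    norm_num at hsum
  obtain ⟨j0, hj0⟩ := hex
  have hu1 : u j0 = 1 := (h01 j0).resolve_left hj0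
  refine ⟨j0, hu1, fun j hj => ?_⟩
  have hle : u j + u j0 ≤ ∑ k, u k := by
    have := Finset.sum_le_sum_of_subset_of_nonneg (Finset.subset_univ ({j, j0} : Finset (Fin (m+1))))
      (fun k _ _ => hnn k)
    simpa [Finset.sum_pair hj] using this
  rcases h01 j with h | h
  · exact h
  · exfalso; rw [hsum, hu1, h] at hle; linarith

lemma grid_close (a b : ℝ) (hab : a ≤ b) (L : ℕ) (hL : 1 ≤ L) (x : ℝ)
    (hx1 : a ≤ x) (hx2 : x ≤ b) :
    ∃ l ∈ Finset.range (L + 1),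
      (x - (a + (l : ℝ) * (b - a) / L)) ^ 2 ≤ (b - a) ^ 2 / (4 * (L : ℝ) ^ 2) := by
  have hL0 : (0:ℝ) < L := by exact_mod_cast hL
  rcases eq_or_lt_of_le hab with h | h
  · refine ⟨0, by simp, ?_⟩
    have hx : x = a := le_antisymm (h ▸ hx2) hx1
    rw [hx, ← h]
    simp
  · set Δ := b - a with hΔdef
    have hΔ : 0 < Δ := by simp [hΔdef]; linarith
    set s := (x - a) / Δ with hsdef
    have hs0 : 0 ≤ s := div_nonneg (by linarith) hΔ.le
    have hs1 : s ≤ 1 := by rw [hsdef, div_le_one hΔ]; simp [hΔdef]; linarith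
    set l := ⌊s * L + 1/2⌋₊ with hldef
    have h1 : (l : ℝ) ≤ s * L + 1/2 := Nat.floor_le (by positivity)
    have h2 : s * L + 1/2 < l + 1 := Nat.lt_floor_add_one _
    have hlL : l ∈ Finset.range (L + 1) := by
      rw [Finset.mem_range, Nat.lt_succ_iff]
      have : (l : ℝ) ≤ (L : ℝ) + 1/2 := by nlinarith
      by_contra hc
      push_neg at hc
      have : (L : ℝ) + 1 ≤ (l : ℝ) := by exact_mod_cast hc
      linarith
    refine ⟨l, hlL, ?_⟩
    have hx : x = a + s * Δ := by
      rw [hsdef]; field_simp; ring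
    have hrw : x - (a + (l : ℝ) * Δ / L) = (s * (L:ℝ) - l) * (Δ / L) := by
      rw [hx]; field_simp; ring
    rw [hrw]
    have h3 : (s * (L:ℝ) - l) ^ 2 ≤ 1/4 := by nlinarith
    have h4 : ((s * (L:ℝ) - l) * (Δ / L)) ^ 2 = (s * (L:ℝ) - l) ^ 2 * (Δ^2 / (L:ℝ)^2) := by
      field_simp
    rw [h4]
    calc (s * (L:ℝ) - l) ^ 2 * (Δ^2 / (L:ℝ)^2) ≤ (1/4) * (Δ^2 / (L:ℝ)^2) :=
          mul_le_mul_of_nonneg_right h3 (by positivity)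
      _ = Δ^2 / (4 * (L:ℝ)^2) := by ring

/-- MILP-1 underestimates the MIQP (11), with gap at most
`T · Σᵢ γᵢ · maxⱼ (Pmaxᵢⱼ − Pminᵢⱼ)² / (4L²)`. -/
theorem milp1_lower_bound_and_gap (d : DEDData) (L : ℕ) (hL : 1 ≤ L)
    (hgamma : ∀ i, 0 ≤ d.gamma i)
    (hintervals : ∀ i j, 0 < d.Pmin i j ∧ d.Pmin i j ≤ d.Pmax i j)
    (hne : (d.milpVals L).Nonempty) :
    sInf (d.milpVals L) ≤ sInf d.miqpVals ∧
    sInf d.miqpVals - sInf (d.milpVals L) ≤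
      (d.T : ℝ) * ∑ i,
        d.gamma i *
          (Finset.univ.sup' Finset.univ_nonempty
            (fun j : Fin (d.n i + 1) => (d.Pmax i j - d.Pmin i j) ^ 2))
          / (4 * (L : ℝ) ^ 2) := by
  classical
  set M : (i : Fin d.N) → ℝ := fun i =>
    Finset.univ.sup' Finset.univ_nonempty
      (fun j : Fin (d.n i + 1) => (d.Pmax i j - d.Pmin i j) ^ 2) with hM
  set E : ℝ := (d.T : ℝ) * ∑ i, d.gamma i * M i / (4 * (L : ℝ) ^ 2) with hE
  -- MIQP values are MILP values (with exact z)
  have hsub : d.miqpVals ⊆ d.milpVals L := by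
    rintro c ⟨P, p, u, SR, hfeas, rfl⟩
    refine ⟨P, p, u, SR, fun t i j => d.gamma i * (p t i j) ^ 2 + d.beta i * p t i j,
      hfeas, ?_, ?_⟩
    · intro t i j l hl
      obtain ⟨-, -, -, -, -, h01, hbnd, -, -⟩ := hfeas
      rcases h01 t i j with h | h
      · have hp0 : p t i j = 0 := by
          obtain ⟨h1, h2⟩ := hbnd t i j
          rw [h] at h1 h2
          simp at h1 h2
          linarith
        simp [hp0, h]
      · rw [h]
        have hγ := hgamma i
        nlinarith [sq_nonneg (p t i j -
          (d.Pmin i j + (l : ℝ) * (d.Pmax i j - d.Pmin i j) / L))]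
    · refine Finset.sum_congr rfl fun t _ => Finset.sum_congr rfl fun i _ => ?_
      obtain ⟨-, -, -, -, -, h01, hbnd, hsump, hsumu⟩ := hfeas
      obtain ⟨j0, hj1, hj0⟩ := exists_one_aux (u t i) (h01 t i) (hsumu t i)
      have hp0 : ∀ j, j ≠ j0 → p t i j = 0 := by
        intro j hj
        obtain ⟨h1, h2⟩ := hbnd t i j
        rw [hj0 j hj] at h1 h2
        simp at h1 h2
        linarith
      have hpP : p t i j0 = P t i := by
        rw [← hsump t i, Finset.sum_eq_single j0 (fun j _ hj => hp0 j hj) (by simp)]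
      have hsumz : ∑ j, (d.gamma i * (p t i j) ^ 2 + d.beta i * p t i j)
          = d.gamma i * (p t i j0) ^ 2 + d.beta i * p t i j0 :=
        Finset.sum_eq_single j0 (fun j _ hj => by rw [hp0 j hj]; ring) (by simp)
      rw [hsumz, hpP]
      ring
  -- key estimate: every MILP value is within E below some MIQP value
  have hkey : ∀ c' ∈ d.milpVals L, ∃ c ∈ d.miqpVals, c ≤ c' + E := by
    rintro c' ⟨P, p, u, SR, z, hfeas, hcuts, rfl⟩
    refine ⟨_, ⟨P, p, u, SR, hfeas, rfl⟩, ?_⟩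
    obtain ⟨-, -, -, -, -, h01, hbnd, hsump, hsumu⟩ := hfeas
    have hterm : ∀ t i, d.beta i * P t i + d.gamma i * (P t i) ^ 2
        ≤ (∑ j, z t i j) + d.gamma i * M i / (4 * (L : ℝ) ^ 2) := by
      intro t i
      have hγ := hgamma i
      obtain ⟨j0, hj1, hj0⟩ := exists_one_aux (u t i) (h01 t i) (hsumu t i)
      have hp0 : ∀ j, j ≠ j0 → p t i j = 0 := by
        intro j hj
        obtain ⟨h1, h2⟩ := hbnd t i j
        rw [hj0 j hj] at h1 h2
        simp at h1 h2
        linarith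
      have hpP : p t i j0 = P t i := by
        rw [← hsump t i, Finset.sum_eq_single j0 (fun j _ hj => hp0 j hj) (by simp)]
      have hzpos : ∀ j ∈ Finset.univ.erase j0, 0 ≤ z t i j := by
        intro j hj
        have hcut := hcuts t i j 0 (by simp)
        rw [hp0 j (Finset.ne_of_mem_erase hj), hj0 j (Finset.ne_of_mem_erase hj)] at hcut
        simpa using hcut
      have hzsum : z t i j0 ≤ ∑ j, z t i j := by
        have := Finset.add_sum_erase Finset.univ (z t i) (Finset.mem_univ j0)
        have h2 := Finset.sum_nonneg hzpos
        linarith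
      have hinP : d.Pmin i j0 ≤ P t i ∧ P t i ≤ d.Pmax i j0 := by
        obtain ⟨h1, h2⟩ := hbnd t i j0
        rw [hj1] at h1 h2
        simp at h1 h2
        rw [← hpP]
        exact ⟨h1, h2⟩
      obtain ⟨l, hl, hlsq⟩ := grid_close (d.Pmin i j0) (d.Pmax i j0) (hintervals i j0).2
        L hL (P t i) hinP.1 hinP.2
      have hcut := hcuts t i j0 l hl
      rw [hpP, hj1] at hcut
      set x := d.Pmin i j0 + (l : ℝ) * (d.Pmax i j0 - d.Pmin i j0) / L with hxdef
      clear_value x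
      have hMle : (d.Pmax i j0 - d.Pmin i j0) ^ 2 ≤ M i :=
        Finset.le_sup' (fun j : Fin (d.n i + 1) => (d.Pmax i j - d.Pmin i j) ^ 2)
          (Finset.mem_univ j0)
      have hA : d.gamma i * (P t i - x) ^ 2
          ≤ d.gamma i * ((d.Pmax i j0 - d.Pmin i j0) ^ 2 / (4 * (L : ℝ) ^ 2)) :=
        mul_le_mul_of_nonneg_left hlsq hγ
      have hB : d.gamma i * ((d.Pmax i j0 - d.Pmin i j0) ^ 2 / (4 * (L : ℝ) ^ 2))
          ≤ d.gamma i * M i / (4 * (L : ℝ) ^ 2) := by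
        rw [mul_div_assoc]
        have hL0 : (0:ℝ) < L := by exact_mod_cast hL
        gcongr
      have hid : d.beta i * P t i + d.gamma i * (P t i) ^ 2
          = ((2 * d.gamma i * x + d.beta i) * P t i - d.gamma i * x ^ 2 * 1)
            + d.gamma i * (P t i - x) ^ 2 := by ring
      linarith
    calc ∑ t, ∑ i, (d.alpha i + d.beta i * P t i + d.gamma i * (P t i) ^ 2)
        ≤ ∑ t, ∑ i, ((d.alpha i + ∑ j, z t i j) + d.gamma i * M i / (4 * (L : ℝ) ^ 2)) := by
          refine Finset.sum_le_sum fun t _ => Finset.sum_le_sum fun i _ => ?_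
          have := hterm t i
          linarith
      _ = (∑ t, ∑ i, (d.alpha i + ∑ j, z t i j)) + E := by
          simp only [Finset.sum_add_distrib, Finset.sum_const, Finset.card_univ,
            Fintype.card_fin, nsmul_eq_mul, hE]
  have hAne : d.miqpVals.Nonempty := by
    obtain ⟨c', P, p, u, SR, z, hfeas, -, -⟩ := hne
    exact ⟨_, P, p, u, SR, hfeas, rfl⟩
  have hAbdd : BddBelow d.miqpVals := by
    refine ⟨∑ t : Fin d.T, ∑ i, (d.alpha i - |d.beta i| * d.Pmax i (Fin.last _)), ?_⟩
    rintro c ⟨P, p, u, SR, hfeas, rfl⟩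
    obtain ⟨-, hlim, -, -, -, -, -, -, -⟩ := hfeas
    refine Finset.sum_le_sum fun t _ => Finset.sum_le_sum fun i _ => ?_
    obtain ⟨h1, h2⟩ := hlim t i
    have hpos := (hintervals i 0).1
    have hγ := hgamma i
    nlinarith [mul_nonneg (by linarith [neg_abs_le (d.beta i)] : (0:ℝ) ≤ |d.beta i| + d.beta i)
        (by linarith : (0:ℝ) ≤ P t i),
      mul_nonneg (abs_nonneg (d.beta i)) (by linarith : (0:ℝ) ≤ d.Pmax i (Fin.last _) - P t i),
      mul_nonneg hγ (sq_nonneg (P t i))]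
  have hBbdd : BddBelow (d.milpVals L) := by
    obtain ⟨B, hB⟩ := hAbdd
    refine ⟨B - E, fun c' hc' => ?_⟩
    obtain ⟨c, hc, hcc⟩ := hkey c' hc'
    have := hB hc
    linarith
  refine ⟨csInf_le_csInf hBbdd hAne hsub, ?_⟩
  have h1 : sInf d.miqpVals - E ≤ sInf (d.milpVals L) := by
    refine le_csInf hne fun c' hc' => ?_
    obtain ⟨c, hc, hcc⟩ := hkey c' hc'
    have := csInf_le hAbdd hc
    linarith
  linarith
end
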